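/- arXiv:2005.07357 — 3 statements merged into one kernel-verified Lean document; each statement's English description precedes it below -/
import Mathlib

section
/- If S and T are two balanced rooted binary phylogenetic X-trees on the same label set X with n = |X|, then mast(S, T) ≥ n^0.17; in particular mast(S, T) > n^(1/6) when n > 1. -/
/-!
Rooted binary phylogenetic trees, restrictions, agreement subtrees, and
maximum agreement subtrees (MASTs), following Martin–Thatte style definitions.
-/

namespace PhyloMAST

/-- A rooted binary tree with leaves labelled by `α`. -/
inductive PTree (α : Type) : Type
  | leaf : α → PTree α
  | node : PTree α → PTree α → PTree α

namespace PTree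

variable {α β : Type}

/-- The list of leaf labels, read left to right. -/
def leafList : PTree α → List α
  | leaf x => [x]
  | node l r => leafList l ++ leafList r

/-- The set of leaf labels. -/
def leaves [DecidableEq α] (t : PTree α) : Finset α := t.leafList.toFinset

/-- The height: number of edges on a longest root-to-leaf path. -/
def height : PTree α → ℕ
  | leaf _ => 0
  | node l r => max (height l) (height r) + 1

/-- `t` is a genuine phylogenetic tree: its leaf labels are pairwise distinct. -/
def Phylo (t : PTree α) : Prop := t.leafList.Nodup

/-- `t` is balanced: its number of leaves is `2 ^ height`. -/
def Balanced (t : PTree α) : Prop := t.leafList.length = 2 ^ t.height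

/-- The restriction `t|Y`: the minimal subtree connecting the leaves in `Y`
with all non-root degree-two vertices suppressed; `none` if no leaf of `t`
lies in `Y`. -/
def restrict [DecidableEq α] : PTree α → Finset α → Option (PTree α)
  | leaf x, Y => if x ∈ Y then some (leaf x) else none
  | node l r, Y =>
    match restrict l Y, restrict r Y with
    | some l', some r' => some (node l' r')
    | some l', none => some l'
    | none, some r' => some r'
    | none, none => none

/-- Isomorphism of leaf-labelled rooted binary trees (children are unordered). -/
inductive Iso : PTree α → PTree α → Prop
  | leaf (x : α) : Iso (leaf x) (leaf x)
  | node {a b c d : PTree α} : Iso a c → Iso b d → Iso (node a b) (node c d)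
  | swap {a b c d : PTree α} : Iso a d → Iso b c → Iso (node a b) (node c d)

/-- `Agree S T Y`: the set `Y` induces an agreement subtree of `S` and `T`. -/
def Agree [DecidableEq α] (S T : PTree α) (Y : Finset α) : Prop :=
  Y ⊆ S.leaves ∩ T.leaves ∧
    ∃ S' T', S.restrict Y = some S' ∧ T.restrict Y = some T' ∧ Iso S' T'

/-- `mast S T`: the maximum size of an agreement subtree of `S` and `T`. -/
noncomputable def mast [DecidableEq α] (S T : PTree α) : ℕ :=
  sSup {k | ∃ Y : Finset α, Agree S T Y ∧ Y.card = k}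

/-- The caterpillar tree `(l₁, l₂, …, lₙ)` built from a (nonempty) list:
`l₁` and `l₂` share a parent, and each later leaf hangs off the path to the
root, which is adjacent to the last leaf. -/
def catList [Inhabited α] : List α → PTree α
  | [] => leaf default
  | x :: xs => xs.foldl (fun t y => node t (leaf y)) (leaf x)

/-- `T` embeds the phylogenetic tree `T'`: the label set of `T'` is contained
in that of `T`, and the restriction of `T` to it is isomorphic to `T'`. -/
def Embeds [DecidableEq α] (T T' : PTree α) : Prop :=
  T'.leaves ⊆ T.leaves ∧ ∃ R, T.restrict T'.leaves = some R ∧ Iso R T'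

/-- `Subtree s t`: `s` is a (pendant) subtree of `t` (possibly `t` itself). -/
inductive Subtree : PTree α → PTree α → Prop
  | refl (t : PTree α) : Subtree t t
  | left {s l r : PTree α} : Subtree s l → Subtree s (node l r)
  | right {s l r : PTree α} : Subtree s r → Subtree s (node l r)

/-- The pendant subtrees rooted at depth `k`, read left to right. -/
def subtreesAt : ℕ → PTree α → List (PTree α)
  | 0, t => [t]
  | _ + 1, leaf x => [leaf x]
  | k + 1, node l r => subtreesAt k l ++ subtreesAt k r

/-- Two trees have the same unlabelled shape (a labelling of the second
yields the first). -/
inductive SameShape : PTree α → PTree β → Prop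
  | leaf (x : α) (y : β) : SameShape (leaf x) (leaf y)
  | node {a b : PTree α} {c d : PTree β} :
      SameShape a c → SameShape b d → SameShape (node a b) (node c d)

end PTree

end PhyloMAST

open PhyloMAST PTree

/-!
Let `k` be the number of common leaves of `S` and `T` and `H = height S + height T`; we show
`k ^ c * ρ ^ H ≤ mast S T` for all phylogenetic trees, by induction on the two trees. The children
at the two roots cut the common leaves into four blocks `L(Sᵢ) ∩ L(Tⱼ)`. If both blocks on one
diagonal hold at least `k / 20` leaves, agreement subtrees of the two diagonal pairs join under
the roots: the bound doubles while `H` drops by `2`. Otherwise one child of one root carries at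
least `9k / 10` of the common leaves, and `H` drops by `1` while `k` shrinks by at most `9 / 10`.
Both steps preserve the bound as soon as `(10/9) ^ c * ρ ≤ 1` and `20 ^ c * ρ ^ 2 ≤ 2`, which hold
for `c = 321/1300` and `ρ = 2 ^ (-1/26)`. For balanced trees on `n = 2 ^ m` leaves, `k = n` and
`H = 2m`, so `k ^ c * ρ ^ H = n ^ (c - 1/13) = n ^ 0.17`.
-/

theorem rpow_le_rpow_of_pow_le_pow {x y c : ℝ} {p q : ℕ} (hx : 0 ≤ x) (hy : 0 ≤ y) (hc : 0 ≤ c)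
    (hq : q ≠ 0) (h : x ^ q ≤ y ^ p) : x ^ c ≤ y ^ (p * c / q) := by
  have hxy : x ≤ y ^ ((p : ℝ) / q) := by
    rw [div_eq_mul_inv, Real.rpow_natCast_mul hy, ← Real.pow_rpow_inv_natCast hx hq]
    exact Real.rpow_le_rpow (by positivity) h (by positivity)
  calc x ^ c ≤ (y ^ ((p : ℝ) / q)) ^ c := Real.rpow_le_rpow hx hxy hc
    _ = y ^ (p * c / q) := by rw [← Real.rpow_mul hy]; ring_nf

theorem ten_ninths_rpow_mul_le_one : (10 / 9 : ℝ) ^ (321 / 1300 : ℝ) * 2 ^ (-(1 / 26) : ℝ) ≤ 1 :=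
  calc (10 / 9 : ℝ) ^ (321 / 1300 : ℝ) * 2 ^ (-(1 / 26) : ℝ)
      ≤ 2 ^ ((2 : ℕ) * (321 / 1300 : ℝ) / (13 : ℕ)) * 2 ^ (-(1 / 26) : ℝ) := by
        gcongr
        exact rpow_le_rpow_of_pow_le_pow (by norm_num) (by norm_num) (by norm_num) (by norm_num)
          (by norm_num)
    _ = 2 ^ ((2 : ℕ) * (321 / 1300 : ℝ) / (13 : ℕ) + -(1 / 26)) := (Real.rpow_add two_pos _ _).symm
    _ ≤ 1 := Real.rpow_le_one_of_one_le_of_nonpos (by norm_num) (by norm_num)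

theorem twenty_rpow_mul_sq_le_two :
    (20 : ℝ) ^ (321 / 1300 : ℝ) * ((2 : ℝ) ^ (-(1 / 26) : ℝ)) ^ 2 ≤ 2 :=
  calc (20 : ℝ) ^ (321 / 1300 : ℝ) * ((2 : ℝ) ^ (-(1 / 26) : ℝ)) ^ 2
      ≤ 2 ^ ((13 : ℕ) * (321 / 1300 : ℝ) / (3 : ℕ)) * ((2 : ℝ) ^ (-(1 / 26) : ℝ)) ^ 2 := by
        gcongr
        exact rpow_le_rpow_of_pow_le_pow (by norm_num) (by norm_num) (by norm_num) (by norm_num)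
          (by norm_num)
    _ = 2 ^ ((13 : ℕ) * (321 / 1300 : ℝ) / (3 : ℕ) + -(1 / 26) * (2 : ℕ)) := by
        rw [Real.rpow_add two_pos, Real.rpow_mul_natCast two_pos.le]
    _ ≤ 2 ^ (1 : ℝ) := Real.rpow_le_rpow_of_exponent_le (by norm_num) (by norm_num)
    _ = 2 := Real.rpow_one 2

theorem rpow_mul_pow_le_of_le_mul {c ρ r q k a : ℝ} {m H H' : ℕ} (hc : 0 ≤ c) (hρ₀ : 0 ≤ ρ)
    (hρ₁ : ρ ≤ 1) (hr : 0 ≤ r) (hk : 0 ≤ k) (ha : 0 ≤ a) (hka : k ≤ r * a)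
    (hq : r ^ c * ρ ^ m ≤ q) (hH : H' + m ≤ H) :
    k ^ c * ρ ^ H ≤ q * (a ^ c * ρ ^ H') :=
  calc k ^ c * ρ ^ H ≤ (r ^ c * a ^ c) * (ρ ^ m * ρ ^ H') := by
        gcongr
        · rw [← Real.mul_rpow hr ha]
          exact Real.rpow_le_rpow hk hka hc
        · rw [← pow_add]
          exact pow_le_pow_of_le_one hρ₀ hρ₁ (by omega)
    _ = (r ^ c * ρ ^ m) * (a ^ c * ρ ^ H') := by ring
    _ ≤ q * (a ^ c * ρ ^ H') := by gcongr

/-- Unless both entries on a diagonal of `[[a, b], [c, d]]` reach a twentieth of the total, two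
entries below a twentieth share a row or a column, so the other row or column holds nine tenths. -/
theorem diagonal_or_line_of_four (a b c d : ℕ) :
    (a + b + c + d ≤ 20 * a ∧ a + b + c + d ≤ 20 * d) ∨
      (a + b + c + d ≤ 20 * b ∧ a + b + c + d ≤ 20 * c) ∨
      9 * (a + b + c + d) ≤ 10 * (a + b) ∨ 9 * (a + b + c + d) ≤ 10 * (c + d) ∨
      9 * (a + b + c + d) ≤ 10 * (a + c) ∨ 9 * (a + b + c + d) ≤ 10 * (b + d) := by
  omega

namespace PhyloMAST
namespace PTree

theorem Iso.symm {α : Type} {s t : PTree α} (h : Iso s t) : Iso t s := by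
  induction h with
  | leaf x => exact .leaf x
  | node _ _ ih₁ ih₂ => exact .node ih₁ ih₂
  | swap _ _ ih₁ ih₂ => exact .swap ih₂ ih₁

theorem height_lt_height_node_left {α : Type} (l r : PTree α) : l.height < (node l r).height := by
  simp only [height]; omega

theorem height_lt_height_node_right {α : Type} (l r : PTree α) : r.height < (node l r).height := by
  simp only [height]; omega

variable {α : Type} [DecidableEq α]

section Leaves

@[simp]
theorem leaves_leaf (x : α) : (leaf x).leaves = {x} := by
  simp [leaves, leafList]

@[simp]
theorem leaves_node (l r : PTree α) : (node l r).leaves = l.leaves ∪ r.leaves := by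
  simp [leaves, leafList]

theorem phylo_node {l r : PTree α} (h : Phylo (node l r)) :
    Phylo l ∧ Phylo r ∧ Disjoint l.leaves r.leaves := by
  rw [Phylo, leafList, List.nodup_append] at h
  exact ⟨h.1, h.2.1, List.disjoint_toFinset_iff_disjoint.mpr fun a ha hb => h.2.2 a ha a hb rfl⟩

theorem Phylo.card_leaves_eq_two_pow_height {t : PTree α} (h : Phylo t) (hb : Balanced t) :
    t.leaves.card = 2 ^ t.height :=
  (List.toFinset_card_of_nodup h).trans hb

theorem card_node_inter {l r : PTree α} (hd : Disjoint l.leaves r.leaves) (Y : Finset α) :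
    ((node l r).leaves ∩ Y).card = (l.leaves ∩ Y).card + (r.leaves ∩ Y).card := by
  rw [leaves_node, Finset.union_inter_distrib_right,
    Finset.card_union_of_disjoint (hd.mono Finset.inter_subset_left Finset.inter_subset_left)]

theorem card_inter_node {l r : PTree α} (hd : Disjoint l.leaves r.leaves) (Y : Finset α) :
    (Y ∩ (node l r).leaves).card = (Y ∩ l.leaves).card + (Y ∩ r.leaves).card := by
  simp only [Finset.inter_comm Y]
  exact card_node_inter hd Y

end Leaves

section Restrict

theorem restrict_congr {t : PTree α} {Y Y' : Finset α} (h : ∀ x ∈ t.leaves, x ∈ Y ↔ x ∈ Y') :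
    t.restrict Y = t.restrict Y' := by
  induction t with
  | leaf x => simp [restrict, h x (by simp)]
  | node l r ihl ihr =>
    simp only [leaves_node, Finset.mem_union] at h
    simp only [restrict, ihl fun x hx => h x (.inl hx), ihr fun x hx => h x (.inr hx)]

theorem restrict_eq_none {t : PTree α} {Y : Finset α} (h : Disjoint t.leaves Y) :
    t.restrict Y = none := by
  induction t with
  | leaf x => simpa [restrict] using h
  | node l r ihl ihr =>
    rw [leaves_node, Finset.disjoint_union_left] at h
    simp only [restrict, ihl h.1, ihr h.2]

theorem restrict_singleton {t : PTree α} (ht : Phylo t) {x : α} (hx : x ∈ t.leaves) :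
    t.restrict {x} = some (leaf x) := by
  induction t with
  | leaf y => simp_all [restrict]
  | node l r ihl ihr =>
    obtain ⟨hl, hr, hd⟩ := phylo_node ht
    rw [leaves_node, Finset.mem_union] at hx
    rcases hx with hx | hx
    · have hrx : r.restrict {x} = none :=
        restrict_eq_none (Finset.disjoint_singleton_right.mpr (Finset.disjoint_left.mp hd hx))
      simp only [restrict, ihl hl hx, hrx]
    · have hlx : l.restrict {x} = none :=
        restrict_eq_none (Finset.disjoint_singleton_right.mpr (Finset.disjoint_right.mp hd hx))
      simp only [restrict, ihr hr hx, hlx]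

theorem restrict_node_of_subset_left {l r : PTree α} (hd : Disjoint l.leaves r.leaves)
    {Z : Finset α} (hZ : Z ⊆ l.leaves) : (node l r).restrict Z = l.restrict Z := by
  have hr : r.restrict Z = none := restrict_eq_none (hd.symm.mono_right hZ)
  simp only [restrict, hr]
  cases l.restrict Z <;> rfl

theorem restrict_node_of_subset_right {l r : PTree α} (hd : Disjoint l.leaves r.leaves)
    {Z : Finset α} (hZ : Z ⊆ r.leaves) : (node l r).restrict Z = r.restrict Z := by
  have hl : l.restrict Z = none := restrict_eq_none (hd.mono_right hZ)
  simp only [restrict, hl]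
  cases r.restrict Z <;> rfl

theorem restrict_node_union {l r a b : PTree α} (hd : Disjoint l.leaves r.leaves)
    {Z₁ Z₂ : Finset α} (h₁ : Z₁ ⊆ l.leaves) (h₂ : Z₂ ⊆ r.leaves)
    (ha : l.restrict Z₁ = some a) (hb : r.restrict Z₂ = some b) :
    (node l r).restrict (Z₁ ∪ Z₂) = some (node a b) := by
  have hl : l.restrict (Z₁ ∪ Z₂) = l.restrict Z₁ := restrict_congr fun x hx => by
    simpa using fun hx₂ => absurd (h₂ hx₂) (Finset.disjoint_left.mp hd hx)
  have hr : r.restrict (Z₁ ∪ Z₂) = r.restrict Z₂ := restrict_congr fun x hx => by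
    simpa using fun hx₁ => absurd (h₁ hx₁) (Finset.disjoint_right.mp hd hx)
  simp only [restrict, hl, hr, ha, hb]

end Restrict

section Agree

variable {S T : PTree α} {Z : Finset α}

theorem Agree.subset_left (h : Agree S T Z) : Z ⊆ S.leaves :=
  h.1.trans Finset.inter_subset_left

theorem Agree.subset_right (h : Agree S T Z) : Z ⊆ T.leaves :=
  h.1.trans Finset.inter_subset_right

theorem Agree.symm (h : Agree S T Z) : Agree T S Z := by
  obtain ⟨hZ, S', T', hS', hT', hiso⟩ := h
  exact ⟨Finset.inter_comm S.leaves T.leaves ▸ hZ, T', S', hT', hS', hiso.symm⟩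

theorem agree_singleton (hS : Phylo S) (hT : Phylo T) {x : α} (hx : x ∈ S.leaves ∩ T.leaves) :
    Agree S T {x} := by
  rw [Finset.mem_inter] at hx
  exact ⟨Finset.singleton_subset_iff.mpr (Finset.mem_inter.mpr hx), leaf x, leaf x,
    restrict_singleton hS hx.1, restrict_singleton hT hx.2, .leaf x⟩

theorem Agree.node_left {l r : PTree α} (hd : Disjoint l.leaves r.leaves) (h : Agree l T Z) :
    Agree (node l r) T Z := by
  obtain ⟨S', T', hS', hT', hiso⟩ := h.2
  refine ⟨h.1.trans (Finset.inter_subset_inter_right ?_), S', T', ?_, hT', hiso⟩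
  · simp
  · rw [restrict_node_of_subset_left hd h.subset_left, hS']

theorem Agree.node_right {l r : PTree α} (hd : Disjoint l.leaves r.leaves) (h : Agree r T Z) :
    Agree (node l r) T Z := by
  obtain ⟨S', T', hS', hT', hiso⟩ := h.2
  refine ⟨h.1.trans (Finset.inter_subset_inter_right ?_), S', T', ?_, hT', hiso⟩
  · simp
  · rw [restrict_node_of_subset_right hd h.subset_left, hS']

theorem Agree.of_subtree_left {S' : PTree α} (hsub : Subtree S' S) (hS : Phylo S)
    (h : Agree S' T Z) : Agree S T Z := by
  induction hsub with
  | refl => exact h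
  | left _ ih =>
    obtain ⟨hl, -, hd⟩ := phylo_node hS
    exact (ih hl).node_left hd
  | right _ ih =>
    obtain ⟨-, hr, hd⟩ := phylo_node hS
    exact (ih hr).node_right hd

theorem Agree.of_subtree {S' T' : PTree α} (hS' : Subtree S' S) (hT' : Subtree T' T)
    (hS : Phylo S) (hT : Phylo T) (h : Agree S' T' Z) : Agree S T Z :=
  ((h.of_subtree_left hS' hS).symm.of_subtree_left hT' hT).symm

theorem Agree.join {Sl Sr Tl Tr : PTree α} {Z₁ Z₂ : Finset α}
    (hdS : Disjoint Sl.leaves Sr.leaves) (hdT : Disjoint Tl.leaves Tr.leaves)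
    (h₁ : Agree Sl Tl Z₁) (h₂ : Agree Sr Tr Z₂) :
    Agree (node Sl Sr) (node Tl Tr) (Z₁ ∪ Z₂) := by
  obtain ⟨S₁, T₁, hS₁, hT₁, hiso₁⟩ := h₁.2
  obtain ⟨S₂, T₂, hS₂, hT₂, hiso₂⟩ := h₂.2
  refine ⟨?_, node S₁ S₂, node T₁ T₂,
    restrict_node_union hdS h₁.subset_left h₂.subset_left hS₁ hS₂,
    restrict_node_union hdT h₁.subset_right h₂.subset_right hT₁ hT₂, .node hiso₁ hiso₂⟩
  rw [leaves_node, leaves_node]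
  exact Finset.subset_inter (Finset.union_subset_union h₁.subset_left h₂.subset_left)
    (Finset.union_subset_union h₁.subset_right h₂.subset_right)

theorem Agree.join_swap {Sl Sr Tl Tr : PTree α} {Z₁ Z₂ : Finset α}
    (hdS : Disjoint Sl.leaves Sr.leaves) (hdT : Disjoint Tl.leaves Tr.leaves)
    (h₁ : Agree Sl Tr Z₁) (h₂ : Agree Sr Tl Z₂) :
    Agree (node Sl Sr) (node Tl Tr) (Z₁ ∪ Z₂) := by
  obtain ⟨S₁, T₁, hS₁, hT₁, hiso₁⟩ := h₁.2
  obtain ⟨S₂, T₂, hS₂, hT₂, hiso₂⟩ := h₂.2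
  refine ⟨?_, node S₁ S₂, node T₂ T₁,
    restrict_node_union hdS h₁.subset_left h₂.subset_left hS₁ hS₂,
    Finset.union_comm Z₂ Z₁ ▸ restrict_node_union hdT h₂.subset_right h₁.subset_right hT₂ hT₁,
    .swap hiso₁ hiso₂⟩
  rw [leaves_node, leaves_node, Finset.union_comm Tl.leaves]
  exact Finset.subset_inter (Finset.union_subset_union h₁.subset_left h₂.subset_left)
    (Finset.union_subset_union h₁.subset_right h₂.subset_right)

end Agree

section Mast

variable {S T : PTree α}

theorem bddAbove_agreeCards (S T : PTree α) :
    BddAbove {k | ∃ Y : Finset α, Agree S T Y ∧ Y.card = k} :=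
  ⟨S.leaves.card, by
    rintro _ ⟨Y, hY, rfl⟩
    exact Finset.card_le_card hY.subset_left⟩

theorem card_le_mast {Z : Finset α} (h : Agree S T Z) : Z.card ≤ mast S T :=
  le_csSup (bddAbove_agreeCards S T) ⟨Z, h, rfl⟩

theorem exists_agree_card_eq_mast (h : mast S T ≠ 0) :
    ∃ Z, Agree S T Z ∧ Z.card = mast S T := by
  refine Nat.sSup_mem ?_ (bddAbove_agreeCards S T)
  by_contra hempty
  rw [Set.not_nonempty_iff_eq_empty] at hempty
  exact h (by rw [mast, hempty, csSup_empty]; rfl)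

theorem one_le_mast (hS : Phylo S) (hT : Phylo T) (h : (S.leaves ∩ T.leaves).Nonempty) :
    1 ≤ mast S T := by
  obtain ⟨x, hx⟩ := h
  simpa using card_le_mast (agree_singleton hS hT hx)

theorem mast_le_mast_of_subtree {S' T' : PTree α} (hS' : Subtree S' S) (hT' : Subtree T' T)
    (hS : Phylo S) (hT : Phylo T) : mast S' T' ≤ mast S T :=
  csSup_le_csSup' (bddAbove_agreeCards S T) fun _ ⟨Z, h, hZ⟩ =>
    ⟨Z, h.of_subtree hS' hT' hS hT, hZ⟩

theorem add_mast_le_mast {A B C D : PTree α} (hA : mast A B ≤ mast S T) (hC : mast C D ≤ mast S T)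
    (hjoin : ∀ Z₁ Z₂, Agree A B Z₁ → Agree C D Z₂ → Agree S T (Z₁ ∪ Z₂) ∧ Disjoint Z₁ Z₂) :
    mast A B + mast C D ≤ mast S T := by
  rcases eq_or_ne (mast A B) 0 with h₁ | h₁
  · rwa [h₁, zero_add]
  rcases eq_or_ne (mast C D) 0 with h₂ | h₂
  · rwa [h₂, add_zero]
  obtain ⟨Z₁, hZ₁, hc₁⟩ := exists_agree_card_eq_mast h₁
  obtain ⟨Z₂, hZ₂, hc₂⟩ := exists_agree_card_eq_mast h₂
  obtain ⟨hZ, hd⟩ := hjoin Z₁ Z₂ hZ₁ hZ₂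
  rw [← hc₁, ← hc₂, ← Finset.card_union_of_disjoint hd]
  exact card_le_mast hZ

theorem add_mast_le_mast_node {Sl Sr Tl Tr : PTree α} (hS : Phylo (node Sl Sr))
    (hT : Phylo (node Tl Tr)) : mast Sl Tl + mast Sr Tr ≤ mast (node Sl Sr) (node Tl Tr) := by
  obtain ⟨-, -, hdS⟩ := phylo_node hS
  obtain ⟨-, -, hdT⟩ := phylo_node hT
  exact add_mast_le_mast (mast_le_mast_of_subtree (.left (.refl _)) (.left (.refl _)) hS hT)
    (mast_le_mast_of_subtree (.right (.refl _)) (.right (.refl _)) hS hT) fun _ _ h₁ h₂ =>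
    ⟨h₁.join hdS hdT h₂, hdS.mono h₁.subset_left h₂.subset_left⟩

theorem add_mast_le_mast_node_swap {Sl Sr Tl Tr : PTree α} (hS : Phylo (node Sl Sr))
    (hT : Phylo (node Tl Tr)) : mast Sl Tr + mast Sr Tl ≤ mast (node Sl Sr) (node Tl Tr) := by
  obtain ⟨-, -, hdS⟩ := phylo_node hS
  obtain ⟨-, -, hdT⟩ := phylo_node hT
  exact add_mast_le_mast (mast_le_mast_of_subtree (.left (.refl _)) (.right (.refl _)) hS hT)
    (mast_le_mast_of_subtree (.right (.refl _)) (.left (.refl _)) hS hT) fun _ _ h₁ h₂ =>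
    ⟨h₁.join_swap hdS hdT h₂, hdS.mono h₁.subset_left h₂.subset_left⟩

end Mast

section Bound

variable {c ρ : ℝ}

noncomputable def mastBound (c ρ : ℝ) (S T : PTree α) : ℝ :=
  ((S.leaves ∩ T.leaves).card : ℝ) ^ c * ρ ^ (S.height + T.height)

theorem mastBound_le_mast_of_card_le_one (hc : 0 < c) (hρ₀ : 0 ≤ ρ) (hρ₁ : ρ ≤ 1)
    {S T : PTree α} (hS : Phylo S) (hT : Phylo T) (h : (S.leaves ∩ T.leaves).card ≤ 1) :
    mastBound c ρ S T ≤ mast S T := by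
  rw [mastBound]
  rcases Nat.le_one_iff_eq_zero_or_eq_one.mp h with h | h
  · simp [h, Real.zero_rpow hc.ne']
  · have hmast := one_le_mast hS hT (Finset.card_pos.mp (by omega))
    rw [h, Nat.cast_one, Real.one_rpow, one_mul]
    exact (pow_le_one₀ hρ₀ hρ₁).trans (by exact_mod_cast hmast)

theorem mastBound_le_mast_of_reduce (hc : 0 ≤ c) (hρ₀ : 0 ≤ ρ) (hρ₁ : ρ ≤ 1)
    (hreduce : (10 / 9 : ℝ) ^ c * ρ ≤ 1) {S T S' T' : PTree α}
    (hH : S'.height + T'.height + 1 ≤ S.height + T.height)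
    (hk : 9 * (S.leaves ∩ T.leaves).card ≤ 10 * (S'.leaves ∩ T'.leaves).card)
    (hmast : mast S' T' ≤ mast S T) (ih : mastBound c ρ S' T' ≤ mast S' T') :
    mastBound c ρ S T ≤ mast S T := by
  have hk' : ((S.leaves ∩ T.leaves).card : ℝ) ≤ 10 / 9 * (S'.leaves ∩ T'.leaves).card := by
    have : (9 : ℝ) * (S.leaves ∩ T.leaves).card ≤ 10 * (S'.leaves ∩ T'.leaves).card := by
      exact_mod_cast hk
    linarith
  calc mastBound c ρ S T ≤ 1 * mastBound c ρ S' T' :=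
        rpow_mul_pow_le_of_le_mul hc hρ₀ hρ₁ (by norm_num) (by positivity) (by positivity) hk'
          (by simpa using hreduce) hH
    _ ≤ mast S T := by
        rw [one_mul]
        exact ih.trans (by exact_mod_cast hmast)

theorem mastBound_le_mast_of_split (hc : 0 ≤ c) (hρ₀ : 0 ≤ ρ) (hρ₁ : ρ ≤ 1)
    (hsplit : (20 : ℝ) ^ c * ρ ^ 2 ≤ 2) {S T S₁ T₁ S₂ T₂ : PTree α}
    (hH₁ : S₁.height + T₁.height + 2 ≤ S.height + T.height)
    (hH₂ : S₂.height + T₂.height + 2 ≤ S.height + T.height)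
    (hk₁ : (S.leaves ∩ T.leaves).card ≤ 20 * (S₁.leaves ∩ T₁.leaves).card)
    (hk₂ : (S.leaves ∩ T.leaves).card ≤ 20 * (S₂.leaves ∩ T₂.leaves).card)
    (hmast : mast S₁ T₁ + mast S₂ T₂ ≤ mast S T)
    (ih₁ : mastBound c ρ S₁ T₁ ≤ mast S₁ T₁) (ih₂ : mastBound c ρ S₂ T₂ ≤ mast S₂ T₂) :
    mastBound c ρ S T ≤ mast S T := by
  have h₁ : mastBound c ρ S T ≤ 2 * mastBound c ρ S₁ T₁ :=
    rpow_mul_pow_le_of_le_mul hc hρ₀ hρ₁ (by norm_num) (by positivity) (by positivity)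
      (by exact_mod_cast hk₁) hsplit hH₁
  have h₂ : mastBound c ρ S T ≤ 2 * mastBound c ρ S₂ T₂ :=
    rpow_mul_pow_le_of_le_mul hc hρ₀ hρ₁ (by norm_num) (by positivity) (by positivity)
      (by exact_mod_cast hk₂) hsplit hH₂
  have hmast' : (mast S₁ T₁ : ℝ) + mast S₂ T₂ ≤ mast S T := by exact_mod_cast hmast
  linarith

theorem mastBound_le_mast (hc : 0 < c) (hρ : 0 ≤ ρ) (hreduce : (10 / 9 : ℝ) ^ c * ρ ≤ 1)
    (hsplit : (20 : ℝ) ^ c * ρ ^ 2 ≤ 2) (S T : PTree α) (hS : Phylo S) (hT : Phylo T) :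
    mastBound c ρ S T ≤ mast S T := by
  have hρ₁ : ρ ≤ 1 :=
    (le_mul_of_one_le_left hρ (Real.one_le_rpow (by norm_num) hc.le)).trans hreduce
  induction S generalizing T with
  | leaf x =>
    exact mastBound_le_mast_of_card_le_one hc hρ hρ₁ hS hT
      ((Finset.card_le_card Finset.inter_subset_left).trans (by simp))
  | node Sl Sr ihSl ihSr =>
  induction T with
  | leaf y =>
    exact mastBound_le_mast_of_card_le_one hc hρ hρ₁ hS hT
      ((Finset.card_le_card Finset.inter_subset_right).trans (by simp))
  | node Tl Tr ihTl ihTr =>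
    obtain ⟨hSl, hSr, hdS⟩ := phylo_node hS
    obtain ⟨hTl, hTr, hdT⟩ := phylo_node hT
    have := height_lt_height_node_left Sl Sr
    have := height_lt_height_node_right Sl Sr
    have := height_lt_height_node_left Tl Tr
    have := height_lt_height_node_right Tl Tr
    have := card_node_inter hdS (node Tl Tr).leaves
    have := card_node_inter hdS Tl.leaves
    have := card_node_inter hdS Tr.leaves
    have := card_inter_node hdT Sl.leaves
    have := card_inter_node hdT Sr.leaves
    rcases diagonal_or_line_of_four (Sl.leaves ∩ Tl.leaves).card (Sl.leaves ∩ Tr.leaves).card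
      (Sr.leaves ∩ Tl.leaves).card (Sr.leaves ∩ Tr.leaves).card with
      ⟨h₁, h₂⟩ | ⟨h₁, h₂⟩ | h | h | h | h
    · exact mastBound_le_mast_of_split hc.le hρ hρ₁ hsplit (by omega) (by omega) (by omega)
        (by omega) (add_mast_le_mast_node hS hT)
        (ihSl Tl hSl hTl) (ihSr Tr hSr hTr)
    · exact mastBound_le_mast_of_split hc.le hρ hρ₁ hsplit (by omega) (by omega) (by omega)
        (by omega) (add_mast_le_mast_node_swap hS hT)
        (ihSl Tr hSl hTr) (ihSr Tl hSr hTl)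
    · exact mastBound_le_mast_of_reduce hc.le hρ hρ₁ hreduce (by omega) (by omega)
        (mast_le_mast_of_subtree (.left (.refl _)) (.refl _) hS hT) (ihSl _ hSl hT)
    · exact mastBound_le_mast_of_reduce hc.le hρ hρ₁ hreduce (by omega) (by omega)
        (mast_le_mast_of_subtree (.right (.refl _)) (.refl _) hS hT) (ihSr _ hSr hT)
    · exact mastBound_le_mast_of_reduce hc.le hρ hρ₁ hreduce (by omega) (by omega)
        (mast_le_mast_of_subtree (.refl _) (.left (.refl _)) hS hT) (ihTl hTl)
    · exact mastBound_le_mast_of_reduce hc.le hρ hρ₁ hreduce (by omega) (by omega)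
        (mast_le_mast_of_subtree (.refl _) (.right (.refl _)) hS hT) (ihTr hTr)

end Bound

end PTree
end PhyloMAST

/-- Two balanced rooted binary phylogenetic trees on the same
label set of size `n` have `mast ≥ n ^ 0.17`; in particular
`mast > n ^ (1/6)` when `n > 1`. -/
theorem mast_ge_rpow_of_balanced {α : Type} [DecidableEq α]
    (S T : PTree α) (n : ℕ)
    (hS : Phylo S) (hT : Phylo T) (hbS : Balanced S) (hbT : Balanced T)
    (hX : S.leaves = T.leaves) (hn : n = S.leaves.card) :
    (n : ℝ) ^ (0.17 : ℝ) ≤ (mast S T : ℝ) ∧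
      (1 < n → (n : ℝ) ^ ((1 : ℝ) / 6) < (mast S T : ℝ)) := by
  have hcard := hS.card_leaves_eq_two_pow_height hbS
  have hheight : T.height = S.height := Nat.pow_right_injective le_rfl <| by
    dsimp only
    rw [← hT.card_leaves_eq_two_pow_height hbT, ← hX, hcard]
  have hn' : (n : ℝ) = 2 ^ (S.height : ℝ) := by
    rw [hn, hcard, Real.rpow_natCast]
    push_cast
    rfl
  have hbound : mastBound (321 / 1300) (2 ^ (-(1 / 26) : ℝ)) S T = (n : ℝ) ^ (0.17 : ℝ) := by
    rw [mastBound, ← hX, Finset.inter_self, ← hn, hheight, hn', ← Real.rpow_mul two_pos.le,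
      ← Real.rpow_mul two_pos.le, ← Real.rpow_mul_natCast two_pos.le, ← Real.rpow_add two_pos]
    congr 1
    push_cast
    ring
  have hmast : (n : ℝ) ^ (0.17 : ℝ) ≤ mast S T :=
    hbound ▸ mastBound_le_mast (by norm_num) (by positivity) ten_ninths_rpow_mul_le_one
      twenty_rpow_mul_sq_le_two S T hS hT
  exact ⟨hmast, fun hn1 =>
    (Real.rpow_lt_rpow_of_exponent_lt (by exact_mod_cast hn1) (by norm_num)).trans_le hmast⟩
end

section
/- If C and C' are a pair of anti-caterpillars on the same leaf set of size at least two, then mast(C, C') = 2. -/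
namespace PhyloMAST
namespace PTree

variable {α : Type} [DecidableEq α] [Inhabited α]

lemma catList_append (x : α) (xs : List α) (y : α) :
    catList (x :: xs ++ [y]) = node (catList (x :: xs)) (leaf y) := by
  simp [catList, List.foldl_append]

lemma catList_cons_append (f : List α) (hf : f ≠ []) (y : α) :
    catList (f ++ [y]) = node (catList f) (leaf y) := by
  cases f with
  | nil => simp at hf
  | cons a as => exact catList_append a as y

lemma catList_isNode (x : α) (xs : List α) (h : xs ≠ []) :
    ∃ u v, catList (x :: xs) = node u v := by
  induction xs using List.reverseRecOn with
  | nil => simp at h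
  | append_singleton ys y ih => exact ⟨_, _, catList_append x ys y⟩

lemma leafList_catList (x : α) (xs : List α) :
    (catList (x :: xs)).leafList = x :: xs := by
  induction xs using List.reverseRecOn with
  | nil => simp [catList, leafList]
  | append_singleton ys y ih =>
      rw [show x :: (ys ++ [y]) = (x :: ys) ++ [y] from rfl, catList_append]
      simp [leafList, ih]

lemma leaves_catList (l : List α) (hl : l ≠ []) :
    (catList l).leaves = l.toFinset := by
  cases l with
  | nil => simp at hl
  | cons x xs => simp [leaves, leafList_catList]

lemma restrict_catList (Y : Finset α) (l : List α) (hl : l ≠ []) :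
    restrict (catList l) Y =
      if (l.filter (fun a => a ∈ Y)) = [] then none
      else some (catList (l.filter (fun a => a ∈ Y))) := by
  obtain ⟨x, xs, rfl⟩ : ∃ x xs, l = x :: xs := by
    cases l with
    | nil => simp at hl
    | cons x xs => exact ⟨x, xs, rfl⟩
  clear hl
  induction xs using List.reverseRecOn with
  | nil =>
      by_cases hx : x ∈ Y <;> simp [catList, restrict, hx, List.filter]
  | append_singleton ys y ih =>
      rw [show x :: (ys ++ [y]) = (x :: ys) ++ [y] from rfl, catList_append]
      have hsplit : (((x :: ys) ++ [y]).filter (fun a => a ∈ Y))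
          = ((x :: ys).filter (fun a => a ∈ Y)) ++ (if y ∈ Y then [y] else []) := by
        rw [List.filter_append]
        by_cases hy : y ∈ Y <;> simp [hy]
      rw [hsplit]
      by_cases hf : ((x :: ys).filter (fun a => a ∈ Y)) = []
      · by_cases hy : y ∈ Y
        · simp only [restrict, ih, if_pos hf]
          simp [hy, hf, catList]
        · simp only [restrict, ih, if_pos hf]
          simp [hy, hf]
      · by_cases hy : y ∈ Y
        · simp only [restrict, ih, if_neg hf]
          simp [hy, hf, catList_cons_append _ hf]
        · simp only [restrict, ih, if_neg hf]
          simp [hy, hf]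

lemma iso_leaf_right {x : α} {t : PTree α} (h : Iso t (leaf x)) : t = leaf x := by
  cases h; rfl

lemma iso_leaf_left {x : α} {t : PTree α} (h : Iso (leaf x) t) : t = leaf x := by
  cases h; rfl

lemma not_iso_reverse (m : List α) (hnd : m.Nodup) (hm : 3 ≤ m.length) :
    ¬ Iso (catList m) (catList m.reverse) := by
  obtain ⟨a, rest, rfl⟩ : ∃ a rest, m = a :: rest := by
    cases m with
    | nil => simp at hm
    | cons a rest => exact ⟨a, rest, rfl⟩
  obtain ⟨ms, b, rfl⟩ : ∃ ms b, rest = ms ++ [b] := by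
    cases rest using List.reverseRecOn with
    | nil => simp at hm
    | append_singleton ms b => exact ⟨ms, b, rfl⟩
  have hms : ms ≠ [] := by
    rintro rfl; simp at hm
  have hab : a ≠ b := by
    rintro rfl
    simp [List.nodup_cons] at hnd
  have h1 : catList (a :: (ms ++ [b])) = node (catList (a :: ms)) (leaf b) :=
    catList_append a ms b
  have hrev : (a :: (ms ++ [b])).reverse = b :: (ms.reverse ++ [a]) := by simp
  have h2 : catList ((a :: (ms ++ [b])).reverse)
      = node (catList (b :: ms.reverse)) (leaf a) := by
    rw [hrev]; exact catList_append b ms.reverse a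
  obtain ⟨u, v, huv⟩ := catList_isNode a ms hms
  obtain ⟨u', v', huv'⟩ := catList_isNode b ms.reverse (by simpa using hms)
  intro hiso
  rw [h1, h2, huv, huv'] at hiso
  cases hiso with
  | node h3 h4 => exact hab (by cases h4; rfl)
  | swap h3 h4 => cases h3

lemma filter_mem_length (l : List α) (hnd : l.Nodup) (Y : Finset α)
    (hY : Y ⊆ l.toFinset) :
    (l.filter (fun a => a ∈ Y)).length = Y.card := by
  have h1 : (l.filter (fun a => a ∈ Y)).Nodup := hnd.filter _
  rw [← List.toFinset_card_of_nodup h1]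
  congr 1
  ext x
  simp only [List.mem_toFinset, List.mem_filter, decide_eq_true_eq]
  constructor
  · rintro ⟨_, h⟩; exact h
  · intro hx; exact ⟨by simpa using hY hx, hx⟩

end PTree
end PhyloMAST

open PhyloMAST PTree
/-- A pair of anti-caterpillars on the same leaf set of size
at least two has a MAST of size exactly `2`. -/
theorem mast_antiCaterpillars {α : Type} [DecidableEq α] [Inhabited α]
    (l : List α) (hnd : l.Nodup) (hl : 2 ≤ l.length) :
    mast (catList l) (catList l.reverse) = 2 := by
  have hne : l ≠ [] := by rintro rfl; simp at hl
  obtain ⟨a, b, rest, rfl⟩ : ∃ a b rest, l = a :: b :: rest := by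
    match l, hl with
    | a :: b :: rest, _ => exact ⟨a, b, rest, rfl⟩
  have hrevne : (a :: b :: rest).reverse ≠ [] := by simp
  have hab : a ≠ b := by
    rintro rfl; simp [List.nodup_cons] at hnd
  set L : List α := a :: b :: rest with hL
  have hleaves1 : (catList L).leaves = L.toFinset := leaves_catList L hne
  have hleaves2 : (catList L.reverse).leaves = L.toFinset := by
    rw [leaves_catList L.reverse hrevne]; ext x; simp
  -- the agreement set of size 2
  have hrestfilt : ∀ Y : Finset α,
      restrict (catList L.reverse) Y =
        if ((L.filter (fun a => a ∈ Y)) = []) then none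
        else some (catList ((L.filter (fun a => a ∈ Y)).reverse)) := by
    intro Y
    rw [restrict_catList Y L.reverse hrevne, List.filter_reverse]
    simp only [List.reverse_eq_nil_iff]
  have key2 : Agree (catList L) (catList L.reverse) ({a, b} : Finset α) := by
    have hsub : ({a, b} : Finset α) ⊆ L.toFinset := by
      intro x hx
      simp only [Finset.mem_insert, Finset.mem_singleton] at hx
      rcases hx with rfl | rfl <;> simp [hL]
    have hfilt : L.filter (fun x => x ∈ ({a, b} : Finset α)) = [a, b] := by
      have hnd' : (a :: b :: rest).Nodup := hL ▸ hnd
      have hrest : rest.filter (fun x => x ∈ ({a, b} : Finset α)) = [] := by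
        rw [List.filter_eq_nil_iff]
        intro x hx
        have hx1 : x ≠ a := by
          rintro rfl
          exact (List.nodup_cons.mp hnd').1 (List.mem_cons_of_mem _ hx)
        have hx2 : x ≠ b := by
          rintro rfl
          exact (List.nodup_cons.mp (List.nodup_cons.mp hnd').2).1 hx
        simp [hx1, hx2]
      simp only [hL]
      rw [List.filter_cons_of_pos (by simp), List.filter_cons_of_pos (by simp),
        hrest]
    refine ⟨by rw [hleaves1, hleaves2, Finset.inter_self]; exact hsub,
      catList [a, b], catList [b, a], ?_, ?_, ?_⟩
    · rw [restrict_catList _ L hne, hfilt]; simp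
    · rw [hrestfilt, hfilt]; simp
    · show Iso (node (leaf a) (leaf b)) (node (leaf b) (leaf a))
      exact Iso.swap (Iso.leaf a) (Iso.leaf b)
  have hub : ∀ k ∈ {k | ∃ Y : Finset α,
      Agree (catList L) (catList L.reverse) Y ∧ Y.card = k}, k ≤ 2 := by
    rintro k ⟨Y, ⟨hYsub, S', T', hS', hT', hiso⟩, rfl⟩
    by_contra hk
    push_neg at hk
    have hk3 : 3 ≤ Y.card := hk
    have hYL : Y ⊆ L.toFinset := by
      intro x hx
      have := hYsub hx
      rw [hleaves1, hleaves2, Finset.inter_self] at this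
      exact this
    set f : List α := L.filter (fun x => x ∈ Y) with hf
    have hflen : f.length = Y.card := filter_mem_length L hnd Y hYL
    have hfne : f ≠ [] := by
      intro h; rw [h] at hflen; simp at hflen; omega
    have hS'' : S' = catList f := by
      rw [restrict_catList _ L hne, if_neg hfne] at hS'
      exact (Option.some.injEq _ _ ▸ hS').symm
    have hT'' : T' = catList f.reverse := by
      rw [hrestfilt, if_neg hfne] at hT'
      exact (Option.some.injEq _ _ ▸ hT').symm
    have hfnd : f.Nodup := hnd.filter _
    refine not_iso_reverse f hfnd (by omega) ?_
    rw [← hS'', ← hT'']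
    exact hiso
  have hmem : 2 ∈ {k | ∃ Y : Finset α,
      Agree (catList L) (catList L.reverse) Y ∧ Y.card = k} :=
    ⟨{a, b}, key2, by rw [Finset.card_insert_of_notMem (by simp [hab]),
      Finset.card_singleton]⟩
  exact le_antisymm (csSup_le ⟨2, hmem⟩ hub) (le_csSup ⟨2, hub⟩ hmem)
end

section
/- Let h2 ≥ h1 be nonnegative integers. Let S (respectively T) be a balanced rooted binary tree on 2^(h1+h2) leaves consisting of 2^(h1) balanced pendant subtrees S_1, S_2, ..., S_{2^(h1)} (respectively T_1, T_2, ..., T_{2^(h1)}) each of size 2^(h2). Then the leaves of S and T can each be bijectively labelled with the elements of {1, 2, ..., 2^(h1+h2)} so that, for all i, j ∈ {1, 2, ..., 2^(h1)}, the pendant subtrees S_i and T_j have exactly 2^(h2−h1) labels in common. -/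
open PhyloMAST PTree

/-!
Label the leaves of `S` left to right by `1, …, N`, and those of `T` left to right by `σ n + 1`,
where `σ` exchanges the two leading digits of a position `n < N` written in the mixed radix
`(2^h₁, 2^h₁, 2^(h₂-h₁))`. The pendant subtrees of depth `h₁` of a balanced tree are the
consecutive blocks of `2^h₂` leaves, so `S_i` carries the labels whose leading digit is `i` and,
`σ` being an involution, `T_j` carries those whose second digit is `j`; the common labels are the
`2^(h₂-h₁)` numbers with leading digits `i, j`.
-/

namespace PhyloMAST
namespace PTree

variable {α β : Type}

theorem length_leafList_le_two_pow_height (t : PTree α) :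
    t.leafList.length ≤ 2 ^ t.height := by
  induction t with
  | leaf => simp [leafList, height]
  | node l r ihl ihr =>
    have hl : 2 ^ l.height ≤ 2 ^ max l.height r.height :=
      Nat.pow_le_pow_right two_pos (le_max_left _ _)
    have hr : 2 ^ r.height ≤ 2 ^ max l.height r.height :=
      Nat.pow_le_pow_right two_pos (le_max_right _ _)
    simp only [leafList, height, List.length_append, pow_succ]
    omega

theorem Balanced.of_node {l r : PTree α} (h : (node l r).Balanced) :
    l.Balanced ∧ r.Balanced ∧ l.height = r.height := by
  have hl := length_leafList_le_two_pow_height l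
  have hr := length_leafList_le_two_pow_height r
  have hml : 2 ^ l.height ≤ 2 ^ max l.height r.height :=
    Nat.pow_le_pow_right two_pos (le_max_left _ _)
  have hmr : 2 ^ r.height ≤ 2 ^ max l.height r.height :=
    Nat.pow_le_pow_right two_pos (le_max_right _ _)
  simp only [Balanced, leafList, height, List.length_append, pow_succ] at h
  have hl_eq : 2 ^ l.height = 2 ^ max l.height r.height := by omega
  have hr_eq : 2 ^ r.height = 2 ^ max l.height r.height := by omega
  refine ⟨by unfold Balanced; omega, by unfold Balanced; omega, ?_⟩
  exact Nat.pow_right_injective le_rfl (hl_eq.trans hr_eq.symm)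

theorem Phylo.of_card_leaves [DecidableEq α] {t : PTree α}
    (h : t.leaves.card = t.leafList.length) : t.Phylo :=
  Multiset.coe_nodup.mp (Multiset.toFinset_card_eq_card_iff_nodup.mp h)

def labelFrom (g : ℕ → β) : ℕ → PTree α → PTree β
  | off, leaf _ => leaf (g off)
  | off, node l r => node (labelFrom g off l) (labelFrom g (off + l.leafList.length) r)

theorem sameShape_labelFrom (g : ℕ → β) (off : ℕ) (t : PTree α) :
    SameShape (labelFrom g off t) t := by
  induction t generalizing off with
  | leaf => exact .leaf _ _
  | node l r ihl ihr => exact .node (ihl _) (ihr _)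

theorem leafList_labelFrom (g : ℕ → β) (off : ℕ) (t : PTree α) :
    (labelFrom g off t).leafList = (List.range' off t.leafList.length).map g := by
  induction t generalizing off with
  | leaf => rfl
  | node l r ihl ihr =>
    simp only [labelFrom, leafList, ihl, ihr, ← List.map_append, List.length_append,
      List.range'_append_1]

theorem leafList_of_mem_subtreesAt_labelFrom (g : ℕ → β) {k m off : ℕ} {t : PTree α}
    (hb : t.Balanced) (hh : t.height = k + m) {A : PTree β}
    (hA : A ∈ (labelFrom g off t).subtreesAt k) :
    ∃ i < 2 ^ k, A.leafList = (List.range' (off + i * 2 ^ m) (2 ^ m)).map g := by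
  induction k generalizing off t with
  | zero =>
    rw [subtreesAt, List.mem_singleton] at hA
    refine ⟨0, Nat.one_pos, ?_⟩
    rw [hA, leafList_labelFrom, hb, hh]
    simp
  | succ k ih =>
    cases t with
    | leaf => simp [height] at hh; omega
    | node l r =>
      obtain ⟨hbl, hbr, hlr⟩ := hb.of_node
      have hhl : l.height = k + m := by simp only [height, hlr, max_self] at hh; omega
      have hl_len : l.leafList.length = 2 ^ k * 2 ^ m := by rw [hbl, hhl, pow_add]
      rw [labelFrom, subtreesAt, List.mem_append] at hA
      rcases hA with hA | hA
      · obtain ⟨i, hi, hAi⟩ := ih hbl hhl hA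
        exact ⟨i, hi.trans (Nat.pow_lt_pow_right one_lt_two k.lt_succ_self), hAi⟩
      · obtain ⟨i, hi, hAi⟩ := ih hbr (hlr ▸ hhl) hA
        refine ⟨2 ^ k + i, by rw [pow_succ]; omega, ?_⟩
        rw [hAi, hl_len, add_mul, add_assoc]

theorem leaves_eq_image_Ico [DecidableEq β] {t : PTree β} {g : ℕ → β} {a n : ℕ}
    (h : t.leafList = (List.range' a n).map g) :
    t.leaves = (Finset.Ico a (a + n)).image g := by
  ext x
  simp [leaves, h, List.mem_range'_1]

end PTree
end PhyloMAST

namespace PhyloMAST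

theorem mem_Ico_mul_iff_div_eq {n k x : ℕ} (hn : 0 < n) :
    x ∈ Finset.Ico (k * n) (k * n + n) ↔ x / n = k := by
  rw [Finset.mem_Ico, Nat.div_eq_iff hn]
  omega

/-- Writing `x = (a * p + b) * d + c` with `b < p` and `c < d`, exchange the digits `a` and `b`. -/
def swapDigits (p d x : ℕ) : ℕ := (x / d % p * p + x / d / p) * d + x % d

section swapDigits

variable {p d x : ℕ}

theorem swapDigits_mod : swapDigits p d x % d = x % d := by
  simp [swapDigits]

theorem swapDigits_div (hd : 0 < d) : swapDigits p d x / d = x / d % p * p + x / d / p := by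
  rw [swapDigits, add_comm, Nat.add_mul_div_right _ _ hd, Nat.div_eq_of_lt (Nat.mod_lt x hd),
    zero_add]

theorem swapDigits_div_div_and_div_mod (hd : 0 < d) (hx : x / d / p < p) :
    swapDigits p d x / d / p = x / d % p ∧ swapDigits p d x / d % p = x / d / p := by
  rw [swapDigits_div hd]
  exact (Nat.div_mod_unique ((Nat.zero_le _).trans_lt hx)).mpr ⟨by ring, hx⟩

theorem swapDigits_swapDigits (hd : 0 < d) (hx : x / d / p < p) :
    swapDigits p d (swapDigits p d x) = x := by
  obtain ⟨hdiv, hmod⟩ := swapDigits_div_div_and_div_mod hd hx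
  rw [swapDigits, hdiv, hmod, swapDigits_mod, Nat.div_add_mod', Nat.div_add_mod']

theorem image_swapDigits_range (hd : 0 < d) :
    (Finset.range (p * (d * p))).image (swapDigits p d) = Finset.range (p * (d * p)) := by
  have hlt : ∀ y, y < p * (d * p) ↔ y / d / p < p := fun y => by
    rcases p.eq_zero_or_pos with rfl | hp
    · simp
    · rw [Nat.div_div_eq_div_mul, Nat.div_lt_iff_lt_mul (by positivity), mul_comm]
  ext x
  simp only [Finset.mem_image, Finset.mem_range, hlt]
  constructor
  · rintro ⟨y, hy, rfl⟩
    rw [(swapDigits_div_div_and_div_mod hd hy).1]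
    exact Nat.mod_lt _ ((Nat.zero_le _).trans_lt hy)
  · intro hx
    refine ⟨swapDigits p d x, ?_, swapDigits_swapDigits hd hx⟩
    rw [(swapDigits_div_div_and_div_mod hd hx).1]
    exact Nat.mod_lt _ ((Nat.zero_le _).trans_lt hx)

theorem card_Ico_inter_image_swapDigits {i j : ℕ} (hd : 0 < d) (hi : i < p) (hj : j < p) :
    (Finset.Ico (i * (d * p)) (i * (d * p) + d * p) ∩
      (Finset.Ico (j * (d * p)) (j * (d * p) + d * p)).image (swapDigits p d)).card = d := by
  have hp : 0 < p := by omega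
  suffices h : Finset.Ico (i * (d * p)) (i * (d * p) + d * p) ∩
      (Finset.Ico (j * (d * p)) (j * (d * p) + d * p)).image (swapDigits p d) =
      Finset.Ico ((i * p + j) * d) ((i * p + j) * d + d) by
    rw [h, Nat.card_Ico]
    omega
  ext x
  simp only [Finset.mem_inter, Finset.mem_image, mem_Ico_mul_iff_div_eq (Nat.mul_pos hd hp),
    mem_Ico_mul_iff_div_eq hd, ← Nat.div_div_eq_div_mul]
  have hdigits : x / d = i * p + j ↔ x / d / p = i ∧ x / d % p = j := by
    rw [Nat.div_mod_unique hp]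
    constructor
    · intro h
      exact ⟨by rw [h]; ring, hj⟩
    · rintro ⟨h, -⟩
      rw [← h]; ring
  rw [hdigits]
  constructor
  · rintro ⟨hxi, y, hyj, rfl⟩
    obtain ⟨-, hmod⟩ := swapDigits_div_div_and_div_mod hd (hyj ▸ hj)
    exact ⟨hxi, hmod.trans hyj⟩
  · rintro ⟨hxi, hxj⟩
    obtain ⟨hdiv, -⟩ := swapDigits_div_div_and_div_mod hd (hxi ▸ hi)
    exact ⟨hxi, swapDigits p d x, hdiv.trans hxj, swapDigits_swapDigits hd (hxi ▸ hi)⟩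

end swapDigits

end PhyloMAST

/-- If `S₀` and `T₀` are balanced rooted binary trees of
height `h₁ + h₂` (with `h₁ ≤ h₂`), each consisting of `2 ^ h₁` balanced
pendant subtrees of size `2 ^ h₂`, then their leaves can be bijectively
labelled with `{1, …, 2 ^ (h₁ + h₂)}` so that every depth-`h₁` pendant
subtree of `S` shares exactly `2 ^ (h₂ - h₁)` labels with every depth-`h₁`
pendant subtree of `T`. -/
theorem exists_labelling_equal_overlaps (h1 h2 : ℕ) (h12 : h1 ≤ h2)
    (S0 T0 : PTree Unit) (hbS0 : Balanced S0) (hbT0 : Balanced T0)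
    (hhS0 : S0.height = h1 + h2) (hhT0 : T0.height = h1 + h2) :
    ∃ S T : PTree ℕ, SameShape S S0 ∧ SameShape T T0 ∧
      Phylo S ∧ Phylo T ∧
      S.leaves = Finset.Icc 1 (2 ^ (h1 + h2)) ∧
      T.leaves = Finset.Icc 1 (2 ^ (h1 + h2)) ∧
      ∀ A ∈ S.subtreesAt h1, ∀ B ∈ T.subtreesAt h1,
        (A.leaves ∩ B.leaves).card = 2 ^ (h2 - h1) := by
  set p := 2 ^ h1
  set d := 2 ^ (h2 - h1)
  have hd : 0 < d := by positivity
  have hsize : 2 ^ h2 = d * p := by rw [← pow_add, Nat.sub_add_cancel h12]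
  have hN : 2 ^ (h1 + h2) = p * (d * p) := by rw [pow_add, hsize]
  have hshift :
      (Finset.range (2 ^ (h1 + h2))).image (· + 1) = Finset.Icc 1 (2 ^ (h1 + h2)) := by
    rw [Finset.range_eq_Ico, Finset.image_add_right_Ico]
    rfl
  set S := labelFrom (· + 1) 0 S0
  set T := labelFrom ((· + 1) ∘ swapDigits p d) 0 T0
  have hS : S.leaves = Finset.Icc 1 (2 ^ (h1 + h2)) := by
    rw [leaves_eq_image_Ico (leafList_labelFrom _ 0 S0), hbS0, hhS0, zero_add,
      ← Finset.range_eq_Ico, hshift]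
  have hT : T.leaves = Finset.Icc 1 (2 ^ (h1 + h2)) := by
    rw [leaves_eq_image_Ico (leafList_labelFrom _ 0 T0), hbT0, hhT0, zero_add,
      ← Finset.range_eq_Ico, ← Finset.image_image, hN, image_swapDigits_range hd, ← hN,
      hshift]
  refine ⟨S, T, sameShape_labelFrom _ _ _, sameShape_labelFrom _ _ _,
    Phylo.of_card_leaves ?_, Phylo.of_card_leaves ?_, hS, hT, ?_⟩
  · rw [hS, leafList_labelFrom, List.length_map, List.length_range', hbS0, hhS0, Nat.card_Icc]
    rfl
  · rw [hT, leafList_labelFrom, List.length_map, List.length_range', hbT0, hhT0, Nat.card_Icc]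
    rfl
  intro A hA B hB
  obtain ⟨i, hi, hAi⟩ := leafList_of_mem_subtreesAt_labelFrom _ hbS0 hhS0 hA
  obtain ⟨j, hj, hBj⟩ := leafList_of_mem_subtreesAt_labelFrom _ hbT0 hhT0 hB
  rw [leaves_eq_image_Ico hAi, leaves_eq_image_Ico hBj, ← Finset.image_image,
    ← Finset.image_inter _ _ (add_left_injective 1),
    Finset.card_image_of_injective _ (add_left_injective 1)]
  simpa only [zero_add, hsize] using card_Ico_inter_image_swapDigits hd hi hj
end
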